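/- arXiv:2008.07968 — 3 statements merged into one kernel-verified Lean document; each statement's English description precedes it below -/
import Mathlib

section
/- Let σ:[n]→[n] and π:[k]→[k] be two permutations. Then σ contains π if and only if there is a function f:S_π→S_σ such that for every p∈S_π: f(N^L(p)).x < f(p).x < f(N^R(p)).x and f(N^D(p)).y < f(p).y < f(N^U(p)).y, whenever the corresponding neighbor of p is defined. -/
/-- A permutation `σ` of length `n` contains a permutation `π` of length `k` if there is
a strictly increasing map `f : [k] → [n]` such that `π i < π j ↔ σ (f i) < σ (f j)` for
all `i, j`. -/
def PermContains {n k : ℕ} (σ : Equiv.Perm (Fin n)) (π : Equiv.Perm (Fin k)) : Prop :=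
  ∃ f : Fin k → Fin n, StrictMono f ∧ ∀ i j : Fin k, π i < π j ↔ σ (f i) < σ (f j)

/-- The point set `S_π = {(i, π i) : i ∈ [k]}` of a permutation `π`. -/
def pointSet {k : ℕ} (π : Equiv.Perm (Fin k)) : Set (Fin k × Fin k) :=
  {p | p.2 = π p.1}

/-- The point `(i, π i)` of `S_π`. -/
def pt {k : ℕ} (π : Equiv.Perm (Fin k)) (i : Fin k) : ↥(pointSet π) :=
  ⟨(i, π i), rfl⟩

/-- `f : S_π → S_σ` satisfies, for every point `p ∈ S_π`, the four inequalities
`f(N^L(p)).x < f(p).x < f(N^R(p)).x` and `f(N^D(p)).y < f(p).y < f(N^U(p)).y`, whenever the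
corresponding neighbor of `p` is defined.  (A point `p = (x, y) ∈ S_π` is `pt π x`; its
right/left neighbors are `pt π (x ± 1)` and its up/down neighbors are `pt π (π⁻¹ (y ± 1))`.) -/
def IsGuide {n k : ℕ} (σ : Equiv.Perm (Fin n)) (π : Equiv.Perm (Fin k))
    (f : ↥(pointSet π) → ↥(pointSet σ)) : Prop :=
  -- `f(p).x < f(N^R(p)).x` whenever `N^R(p)` is defined
  (∀ (x : Fin k) (h : (x : ℕ) + 1 < k),
      (f (pt π x)).1.1 < (f (pt π ⟨(x : ℕ) + 1, h⟩)).1.1) ∧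
  -- `f(N^L(p)).x < f(p).x` whenever `N^L(p)` is defined
  (∀ (x : Fin k), 0 < (x : ℕ) →
      (f (pt π ⟨(x : ℕ) - 1, lt_of_le_of_lt (Nat.sub_le _ _) x.isLt⟩)).1.1 <
        (f (pt π x)).1.1) ∧
  -- `f(p).y < f(N^U(p)).y` whenever `N^U(p)` is defined
  (∀ (y : Fin k) (h : (y : ℕ) + 1 < k),
      (f (pt π (π⁻¹ y))).1.2 < (f (pt π (π⁻¹ ⟨(y : ℕ) + 1, h⟩))).1.2) ∧
  -- `f(N^D(p)).y < f(p).y` whenever `N^D(p)` is defined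
  (∀ (y : Fin k), 0 < (y : ℕ) →
      (f (pt π (π⁻¹ ⟨(y : ℕ) - 1, lt_of_le_of_lt (Nat.sub_le _ _) y.isLt⟩))).1.2 <
        (f (pt π (π⁻¹ y))).1.2)

/-!
An occurrence `f` of `π` in `σ` directly gives the guide `(x, π x) ↦ (f x, σ (f x))`.
Conversely, the right and up conditions of a guide `g` say that moving one step to the right,
or one step up, in `S_π` moves strictly to the right, or strictly up, in `S_σ`. Chaining these
steps, the first coordinates of `g` form a strictly increasing map `[k] → [n]` whose values under
`σ`, read in the order of the values of `π`, increase as well; that map is an occurrence of `π`.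
-/

theorem strictMono_fin_of_lt_succ {k : ℕ} {α : Type*} [Preorder α] {g : Fin k → α}
    (h : ∀ (x : Fin k) (hx : (x : ℕ) + 1 < k), g x < g ⟨(x : ℕ) + 1, hx⟩) :
    StrictMono g := by
  cases k with
  | zero => exact fun a => a.elim0
  | succ m => exact Fin.strictMono_iff_lt_succ.2 fun i => h i.castSucc (by simp)

theorem isGuide_of_occurrence {n k : ℕ} (σ : Equiv.Perm (Fin n)) (π : Equiv.Perm (Fin k))
    {f : Fin k → Fin n} (hmono : StrictMono f) (hiff : ∀ i j, π i < π j ↔ σ (f i) < σ (f j)) :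
    IsGuide σ π fun p => pt σ (f p.1.1) := by
  have hval : ∀ y y' : Fin k, y < y' → σ (f (π⁻¹ y)) < σ (f (π⁻¹ y')) := fun y y' hy =>
    (hiff _ _).1 (by simpa using hy)
  refine ⟨fun x h => hmono ?_, fun x hx => hmono ?_, fun y h => hval _ _ ?_,
    fun y hy => hval _ _ ?_⟩ <;> simp only [pt, Fin.lt_def] <;> omega

theorem permContains_of_isGuide {n k : ℕ} (σ : Equiv.Perm (Fin n)) (π : Equiv.Perm (Fin k))
    {g : ↥(pointSet π) → ↥(pointSet σ)} (hg : IsGuide σ π g) : PermContains σ π := by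
  obtain ⟨hright, -, hup, -⟩ := hg
  set F : Fin k → Fin n := fun x => (g (pt π x)).1.1
  have hsnd : ∀ x, (g (pt π x)).1.2 = σ (F x) := fun x => (g (pt π x)).2
  have hvalMono : StrictMono fun y => σ (F (π⁻¹ y)) :=
    strictMono_fin_of_lt_succ fun y h => by simpa only [hsnd] using hup y h
  refine ⟨F, strictMono_fin_of_lt_succ hright, fun i j => ?_⟩
  simpa using (hvalMono.lt_iff_lt (a := π i) (b := π j)).symm

/-- `σ` contains `π` iff there is a function `f : S_π → S_σ` satisfying
`f(N^L(p)).x < f(p).x < f(N^R(p)).x` and `f(N^D(p)).y < f(p).y < f(N^U(p)).y` for every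
`p ∈ S_π`, whenever the corresponding neighbor of `p` is defined. -/
theorem permContains_iff_guide {n k : ℕ} (σ : Equiv.Perm (Fin n)) (π : Equiv.Perm (Fin k)) :
    PermContains σ π ↔ ∃ f : ↥(pointSet π) → ↥(pointSet σ), IsGuide σ π f :=
  ⟨fun ⟨_, hmono, hiff⟩ => ⟨_, isGuide_of_occurrence σ π hmono hiff⟩,
    fun ⟨_, hg⟩ => permContains_of_isGuide σ π hg⟩
end

section
/- Let σ:[n]→[n] and π:[k]→[k] be two permutations. The functions f:S_π→S_σ satisfying, for every p∈S_π, the inequalities f(N^L(p)).x < f(p).x < f(N^R(p)).x and f(N^D(p)).y < f(p).y < f(N^U(p)).y (whenever the corresponding neighbor is defined) are in one-to-one correspondence with the occurrences of π in σ. In particular, the number of such functions f equals the number of occurrences of π in σ. -/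
/-- An occurrence of `π` in `σ`: a strictly increasing map `g : [k] → [n]` such that
`π i < π j ↔ σ (g i) < σ (g j)` for all `i, j`. -/
def IsOccurrence {n k : ℕ} (σ : Equiv.Perm (Fin n)) (π : Equiv.Perm (Fin k))
    (g : Fin k → Fin n) : Prop :=
  StrictMono g ∧ ∀ i j : Fin k, π i < π j ↔ σ (g i) < σ (g j)

/-! The occurrence attached to `f` reads the `x`-coordinates of the images of the points of `S_π`.
Along the `x`-axis the neighbor inequalities say exactly that this map is increasing, and along the
`y`-axis that `y ↦ σ (g (π⁻¹ y))` is increasing, which is the order-isomorphism condition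
`π i < π j ↔ σ (g i) < σ (g j)` read through the bijection `π`. -/

lemma Fin.strictMono_of_lt_add_one {k : ℕ} {α : Type*} [Preorder α] {g : Fin k → α}
    (h : ∀ (i : Fin k) (hi : (i : ℕ) + 1 < k), g i < g ⟨i + 1, hi⟩) : StrictMono g := by
  cases k with
  | zero => exact fun i => i.elim0
  | succ k => exact Fin.strictMono_iff_lt_succ.2 fun i => h i.castSucc (by simp)

lemma Equiv.lt_iff_lt_iff_strictMono_comp_symm {α β : Type*} [LinearOrder α] [Preorder β]
    (e : α ≃ α) (h : α → β) :
    (∀ i j, e i < e j ↔ h i < h j) ↔ StrictMono (h ∘ e.symm) := by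
  refine ⟨fun H y y' hy => ?_, fun H i j => ?_⟩
  · exact (H _ _).1 (by simpa using hy)
  · simpa using (H.lt_iff_lt (a := e i) (b := e j)).symm

lemma isOccurrence_iff {n k : ℕ} (σ : Equiv.Perm (Fin n)) (π : Equiv.Perm (Fin k))
    (g : Fin k → Fin n) :
    IsOccurrence σ π g ↔ StrictMono g ∧ StrictMono (σ ∘ g ∘ π.symm) :=
  and_congr_right' (π.lt_iff_lt_iff_strictMono_comp_symm (σ ∘ g))

def pointSetEquiv {k : ℕ} (π : Equiv.Perm (Fin k)) : Fin k ≃ pointSet π where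
  toFun := pt π
  invFun p := p.1.1
  left_inv _ := rfl
  right_inv := fun ⟨(x, y), (h : y = π x)⟩ => by subst h; rfl

lemma isGuide_iff {n k : ℕ} (σ : Equiv.Perm (Fin n)) (π : Equiv.Perm (Fin k))
    (f : pointSet π → pointSet σ) :
    IsGuide σ π f ↔ StrictMono (fun i => (f (pt π i)).1.1) ∧
      StrictMono (fun y => (f (pt π (π⁻¹ y))).1.2) := by
  refine ⟨fun ⟨hR, _, hU, _⟩ => ⟨Fin.strictMono_of_lt_add_one hR, Fin.strictMono_of_lt_add_one hU⟩,
    fun ⟨hx, hy⟩ => ⟨fun x _ => hx ?_, fun x _ => hx ?_, fun y _ => hy ?_, fun y _ => hy ?_⟩⟩ <;>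
  simp only [Fin.lt_def] <;> omega

lemma isGuide_iff_isOccurrence {n k : ℕ} (σ : Equiv.Perm (Fin n)) (π : Equiv.Perm (Fin k))
    (f : pointSet π → pointSet σ) :
    IsGuide σ π f ↔ IsOccurrence σ π (fun i => (f (pt π i)).1.1) := by
  have hy : (fun y => (f (pt π (π⁻¹ y))).1.2) = σ ∘ (fun i => (f (pt π i)).1.1) ∘ π.symm :=
    funext fun y => (f _).2
  rw [isGuide_iff, isOccurrence_iff, hy]

/-- The functions `f : S_π → S_σ` satisfying the neighbor inequalities are in one-to-one
correspondence with the occurrences of `π` in `σ` (namely, the occurrence corresponding to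
`f` sends `i` to the `x`-coordinate of `f (i, π i)`); in particular, the number of such
functions equals the number of occurrences of `π` in `σ`. -/
theorem guide_equiv_occurrences {n k : ℕ} (σ : Equiv.Perm (Fin n)) (π : Equiv.Perm (Fin k)) :
    (∃ e : {f : ↥(pointSet π) → ↥(pointSet σ) // IsGuide σ π f} ≃
        {g : Fin k → Fin n // IsOccurrence σ π g},
      ∀ (f : {f : ↥(pointSet π) → ↥(pointSet σ) // IsGuide σ π f}) (i : Fin k),
        (e f).1 i = (f.1 (pt π i)).1.1) ∧
    Nat.card {f : ↥(pointSet π) → ↥(pointSet σ) // IsGuide σ π f} =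
      Nat.card {g : Fin k → Fin n // IsOccurrence σ π g} := by
  let e := ((pointSetEquiv π).symm.arrowCongr (pointSetEquiv σ).symm).subtypeEquiv
    (isGuide_iff_isOccurrence σ π)
  exact ⟨⟨e, fun _ _ => rfl⟩, Nat.card_congr e⟩
end

section
/- Let G be a finite simple graph on k vertices with maximum degree at most 4. Then there exists a finite simple graph G' on at most 2k vertices with maximum degree at most 3, together with a set M of pairwise disjoint edges of G', such that contracting the edges of M in G' yields a graph isomorphic to G. In particular, G is a minor of a graph on at most 2k vertices of maximum degree 3. -/
/-!
Split every vertex `v` of `G` into the two ends of a new edge `(v, false)–(v, true)` and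
distribute the at most four edges of `G` at `v` so that each end receives at most two of them.
Each end then has degree at most `2 + 1 = 3`, and contracting the new edges gives back `G`.
-/

/-- The quotient graph of a simple graph `H` by an equivalence relation `ρ` on its vertices:
vertices are the equivalence classes, and two distinct classes are adjacent iff some
representative of one is adjacent in `H` to some representative of the other. -/
def quotientGraph {V : Type*} (H : SimpleGraph V) (ρ : Setoid V) :
    SimpleGraph (Quotient ρ) where
  Adj x y := x ≠ y ∧ ∃ a b : V, Quotient.mk ρ a = x ∧ Quotient.mk ρ b = y ∧ H.Adj a b
  symm := by
    constructor
    rintro x y ⟨hxy, a, b, ha, hb, hab⟩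
    exact ⟨hxy.symm, b, a, hb, ha, hab.symm⟩
  loopless := by
    constructor
    rintro x ⟨hx, -⟩
    exact hx rfl

theorem Set.Finite.exists_bool_split_ncard_le {α : Type*} {s : Set α} {n : ℕ} (hs : s.Finite)
    (h : s.ncard ≤ 2 * n) : ∃ c : α → Bool, ∀ i, {x ∈ s | c x = i}.ncard ≤ n := by
  classical
  obtain ⟨t, hts, ht⟩ := Set.exists_subset_card_eq (min_le_right n s.ncard)
  refine ⟨fun x => decide (x ∈ t), fun i => ?_⟩
  cases i
  · have hfiber : {x ∈ s | decide (x ∈ t) = false} = s \ t := by ext; simp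
    rw [hfiber, Set.ncard_sdiff hts (hs.subset hts)]
    omega
  · have hfiber : {x ∈ s | decide (x ∈ t) = true} = t := by
      ext x; simpa using fun hx => hts hx
    rw [hfiber, ht]
    exact min_le_left _ _

noncomputable def quotientGraphKerIso {V W : Type*} {H : SimpleGraph V} {G : SimpleGraph W}
    {f : V → W} (hf : Function.Surjective f)
    (hG : ∀ x y, G.Adj x y ↔ x ≠ y ∧ ∃ a b, f a = x ∧ f b = y ∧ H.Adj a b) :
    quotientGraph H (Setoid.ker f) ≃g G where
  toEquiv := Setoid.quotientKerEquivOfSurjective f hf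
  map_rel_iff' {x y} := by
    induction x using Quotient.inductionOn with | h a => ?_
    induction y using Quotient.inductionOn with | h b => ?_
    change G.Adj (f a) (f b) ↔ _
    simp only [hG, quotientGraph, ne_eq, Quotient.eq, Setoid.ker_def]

namespace SimpleGraph

variable {V : Type*} (G : SimpleGraph V) (side : V → V → Bool)

/-- Each vertex `v` becomes an edge `(v, false)–(v, true)`; an edge `uv` of `G` joins the end
`side u v` of `u` to the end `side v u` of `v`. -/
def split : SimpleGraph (V × Bool) where
  Adj p q := (p.1 = q.1 ∧ p.2 ≠ q.2) ∨ (G.Adj p.1 q.1 ∧ p.2 = side p.1 q.1 ∧ q.2 = side q.1 p.1)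
  symm := by
    constructor
    rintro p q (⟨h1, h2⟩ | ⟨h1, h2, h3⟩)
    · exact Or.inl ⟨h1.symm, h2.symm⟩
    · exact Or.inr ⟨h1.symm, h3, h2⟩
  loopless := by
    constructor
    rintro p (⟨-, h⟩ | ⟨h, -⟩)
    · exact h rfl
    · exact G.irrefl h

theorem split_adj_of_fst_eq {p q : V × Bool} (h1 : p.1 = q.1) (h2 : p.2 ≠ q.2) :
    (G.split side).Adj p q :=
  Or.inl ⟨h1, h2⟩

theorem neighborSet_split_subset (u : V) (i : Bool) :
    (G.split side).neighborSet (u, i) ⊆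
      insert (u, !i) ((fun v => (v, side v u)) '' {v ∈ G.neighborSet u | side u v = i}) := by
  rintro ⟨v, j⟩ (⟨rfl, hij⟩ | ⟨huv, hi, hj⟩)
  · left
    cases i <;> cases j <;> simp_all
  · exact Or.inr ⟨v, ⟨huv, hi.symm⟩, by simp_all⟩

theorem ncard_neighborSet_split_le [Finite V] {n : ℕ}
    (hside : ∀ u i, {v ∈ G.neighborSet u | side u v = i}.ncard ≤ n) (p : V × Bool) :
    ((G.split side).neighborSet p).ncard ≤ n + 1 := by
  obtain ⟨u, i⟩ := p
  calc ((G.split side).neighborSet (u, i)).ncard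
      ≤ (insert (u, !i) ((fun v => (v, side v u)) ''
          {v ∈ G.neighborSet u | side u v = i})).ncard :=
        Set.ncard_le_ncard (G.neighborSet_split_subset side u i) (Set.toFinite _)
    _ ≤ ((fun v => (v, side v u)) '' {v ∈ G.neighborSet u | side u v = i}).ncard + 1 :=
        Set.ncard_insert_le _ _
    _ ≤ {v ∈ G.neighborSet u | side u v = i}.ncard + 1 := by
        gcongr
        exact Set.ncard_image_le (Set.toFinite _)
    _ ≤ n + 1 := by gcongr; exact hside u i

theorem adj_iff_exists_split_adj (x y : V) :
    G.Adj x y ↔ x ≠ y ∧ ∃ a b : V × Bool, a.1 = x ∧ b.1 = y ∧ (G.split side).Adj a b := by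
  constructor
  · intro h
    exact ⟨G.ne_of_adj h, (x, side x y), (y, side y x), rfl, rfl, Or.inr ⟨h, rfl, rfl⟩⟩
  · rintro ⟨hne, a, b, rfl, rfl, (⟨hab, -⟩ | ⟨hab, -⟩)⟩
    · exact absurd hab hne
    · exact hab

end SimpleGraph

/-- Every finite simple graph `G` on `k` vertices with maximum degree at most `4` can be
obtained, up to isomorphism, by contracting a set of pairwise disjoint edges (given here by
the equivalence relation `s`, each of whose classes is either a single vertex or the pair of
endpoints of an edge) in a finite simple graph `G'` on at most `2k` vertices with maximum
degree at most `3`.  In particular, `G` is a minor of a graph on at most `2k` vertices of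
maximum degree `3`. -/
theorem degree_four_graph_is_contraction_of_subcubic (V : Type) [Fintype V] (k : ℕ)
    (hcard : Fintype.card V = k) (G : SimpleGraph V)
    (hdeg : ∀ v : V, (G.neighborSet v).ncard ≤ 4) :
    ∃ (V' : Type) (_ : Fintype V') (G' : SimpleGraph V') (s : Setoid V'),
      Fintype.card V' ≤ 2 * k ∧
      (∀ v : V', (G'.neighborSet v).ncard ≤ 3) ∧
      -- each class of `s` is a single vertex or the two endpoints of an edge of `G'`:
      (∀ a b : V', s.r a b → a = b ∨ G'.Adj a b) ∧
      (∀ a b c : V', s.r a b → s.r a c → b = c ∨ b = a ∨ c = a) ∧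
      Nonempty (quotientGraph G' s ≃g G) := by
  choose side hside using fun u => (G.neighborSet u).toFinite.exists_bool_split_ncard_le (n := 2) (hdeg u)
  refine ⟨V × Bool, inferInstance, G.split side, Setoid.ker Prod.fst, ?_,
    G.ncard_neighborSet_split_le side hside, ?_, ?_,
    ⟨quotientGraphKerIso Prod.fst_surjective (G.adj_iff_exists_split_adj side)⟩⟩
  · simp [hcard, mul_comm]
  · rintro ⟨a, i⟩ ⟨b, j⟩ (rfl : a = b)
    by_cases hij : i = j
    · exact Or.inl (by rw [hij])
    · exact Or.inr (G.split_adj_of_fst_eq side rfl hij)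
  · rintro ⟨a, i⟩ ⟨b, j⟩ ⟨c, l⟩ (rfl : a = b) (rfl : a = c)
    cases i <;> cases j <;> cases l <;> simp
end
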